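/- arXiv:1806.08834 — 10 statements merged into one kernel-verified Lean document; each statement's English description precedes it below -/
import Mathlib

section
/- Let R be a finite type of rows and C a finite type of columns, and let S : R → C → Prop be a sparsity pattern. There exists a real matrix A : Matrix R C ℝ supported on S (i.e., A r c ≠ 0 implies S r c) whose rank equals the cardinality of C if and only if there exists an injective function f : C → R such that S (f c) c holds for every column c. (In words: a sparsity pattern has full generic column rank if and only if its bipartite graph admits a perfect matching from the column nodes to the row nodes.) -/
/-- A matrix `A` is supported on the sparsity pattern `S` if every nonzero
entry `A r c` satisfies `S r c`. -/
def SupportedOn {R C : Type*} (S : R → C → Prop) (A : Matrix R C ℝ) : Prop :=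
  ∀ r c, A r c ≠ 0 → S r c

/-!
Full column rank means the columns are linearly independent. Any `k` of them are then supported
on the rows adjacent to them in the bipartite graph, and `k` independent vectors supported on
a set of `m` coordinates force `k ≤ m`: this is Hall's condition, so Hall's marriage theorem
gives the matching. Conversely, a matching `f` selects the columns `f c` of the identity
matrix, which are independent and supported on the pattern.
-/

theorem LinearIndependent.card_le_card_of_support_subset {K ι R : Type*} [Field K] [Fintype ι]
    {v : ι → R → K} (hv : LinearIndependent K v) (N : Finset R)
    (hN : ∀ i r, v i r ≠ 0 → r ∈ N) : Fintype.card ι ≤ N.card := by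
  let w : ι → N → K := fun i n => v i n
  have hvw : Function.ExtendByZero.linearMap K ((↑) : N → R) ∘ w = v := by
    ext i r
    by_cases hr : r ∈ N
    · exact Subtype.val_injective.extend_apply (w i) 0 ⟨r, hr⟩
    · have hnr : ¬∃ n : N, (n : R) = r := by rintro ⟨n, rfl⟩; exact hr n.2
      simpa [Function.extend_apply' _ _ _ hnr, eq_comm] using mt (hN i r) hr
  have hw : LinearIndependent K w := LinearIndependent.of_comp _ (hvw ▸ hv)
  simpa using hw.fintype_card_le_finrank

theorem Matrix.rank_eq_card_width_iff_linearIndependent_col {K m n : Type*} [Field K]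
    [Fintype n] (A : Matrix m n K) : A.rank = Fintype.card n ↔ LinearIndependent K A.col := by
  rw [linearIndependent_iff_card_eq_finrank_span, Set.finrank, A.rank_eq_finrank_span_cols,
    eq_comm]

theorem Matrix.card_le_card_biUnion_of_linearIndependent_col {K m n : Type*} [Field K]
    [DecidableEq m] {A : Matrix m n K} (hA : LinearIndependent K A.col) (t : n → Finset m)
    (ht : ∀ i j, A i j ≠ 0 → i ∈ t j) (s : Finset n) : s.card ≤ (s.biUnion t).card := by
  have hs : LinearIndependent K fun j : s => A.col j := hA.comp _ Subtype.val_injective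
  simpa using hs.card_le_card_of_support_subset (s.biUnion t)
    fun j i hij => Finset.mem_biUnion.2 ⟨j, j.2, ht i j hij⟩

theorem SupportedOn.exists_injective_of_linearIndependent_col {R C : Type*} [Fintype R]
    {S : R → C → Prop} {A : Matrix R C ℝ} (hS : SupportedOn S A)
    (hA : LinearIndependent ℝ A.col) :
    ∃ f : C → R, Function.Injective f ∧ ∀ c, S (f c) c := by
  classical
  let t c := Finset.univ.filter (S · c)
  have hall (s : Finset C) : s.card ≤ (s.biUnion t).card :=
    A.card_le_card_biUnion_of_linearIndependent_col hA t
      (fun r c h => by simpa [t] using hS r c h) s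
  obtain ⟨f, hf, hft⟩ := (Finset.all_card_le_biUnion_card_iff_exists_injective t).1 hall
  exact ⟨f, hf, fun c => by simpa [t] using hft c⟩

theorem supportedOn_submatrix_one {R C : Type*} [DecidableEq R] {S : R → C → Prop} {f : C → R}
    (hf : ∀ c, S (f c) c) : SupportedOn S ((1 : Matrix R R ℝ).submatrix id f) := by
  intro r c hrc
  obtain rfl : r = f c := by_contra fun h => hrc (Matrix.one_apply_ne h)
  exact hf c

theorem Matrix.linearIndependent_col_submatrix_one {K m n : Type*} [Field K] [DecidableEq m]
    {f : n → m} (hf : Function.Injective f) :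
    LinearIndependent K ((1 : Matrix m m K).submatrix id f).col := by
  convert (Pi.linearIndependent_single_one m K).comp f hf using 1
  ext c i
  simp [Matrix.one_apply, Pi.single_apply]

/-- A sparsity pattern has full generic column rank iff its bipartite graph
admits a perfect matching from columns to rows. -/
theorem generic_full_column_rank_iff_matching
    {R C : Type*} [Fintype R] [Fintype C] (S : R → C → Prop) :
    (∃ A : Matrix R C ℝ, SupportedOn S A ∧ A.rank = Fintype.card C) ↔
      (∃ f : C → R, Function.Injective f ∧ ∀ c, S (f c) c) := by
  classical
  constructor
  · rintro ⟨A, hS, hrank⟩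
    exact hS.exists_injective_of_linearIndependent_col
      ((A.rank_eq_card_width_iff_linearIndependent_col).1 hrank)
  · rintro ⟨f, hf, hfS⟩
    exact ⟨_, supportedOn_submatrix_one hfS,
      (Matrix.rank_eq_card_width_iff_linearIndependent_col _).2
        (Matrix.linearIndependent_col_submatrix_one hf)⟩
end

section
/- Fix an even integer T ≥ 2. Suppose the non-metered bus set O can be partitioned into T/2 pairwise disjoint subsets O̅_1, …, O̅_{T/2} with union O, such that for each k there exists an injective map h_k : O̅_k → M × Fin 2 satisfying adj o ((h_k o).1) for every o ∈ O̅_k (i.e., each O̅_k can be perfectly matched to M ∪ M′ on the bipartite grid graph). Then the P2L phasor pattern for T probing slots has full generic column rank; that is, there exists a real matrix supported on this pattern whose rank equals 2·T·(|M| + |O|). -/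
/-- Sparsity pattern of the bus conductance matrix: nonzero diagonal, and
the `(n,m)` off-diagonal entry is nonzero exactly for distribution lines. -/
def adjDiag {V : Type*} (adj : V → V → Prop) (n m : V) : Prop :=
  n = m ∨ adj n m

/-- The P2L sparsity pattern with phasor data for `T` probing slots.
Rows: metering equations `(t, τ, n)` with `τ ∈ {u, θ, p, q}` (coded as `Fin 4`,
with `τ < 2` meaning `u` or `θ`) at probed buses `n ∈ M`, and coupling
equations `(t, τ, n)` with `τ ∈ {p, q}` (coded as `Fin 2`) at non-metered
buses `n ∈ O` linking slots `t` and `t+1`.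
Columns: `(t, i, m)` for the real/imaginary parts (`i : Fin 2`) of the voltage
of bus `m` at slot `t`. -/
def PhasorPattern {M O : Type*} (adj : (M ⊕ O) → (M ⊕ O) → Prop) (T : ℕ)
    (r : (Fin T × Fin 4 × M) ⊕ (Fin (T - 1) × Fin 2 × O))
    (c : Fin T × Fin 2 × (M ⊕ O)) : Prop :=
  match r with
  | Sum.inl (t, τ, n) =>
      c.1 = t ∧ (if (τ : ℕ) < 2 then c.2.2 = Sum.inl n
                 else adjDiag adj (Sum.inl n) c.2.2)
  | Sum.inr (t, _, n) =>
      ((c.1 : ℕ) = (t : ℕ) ∨ (c.1 : ℕ) = (t : ℕ) + 1) ∧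
        adjDiag adj (Sum.inr n) c.2.2

/-!
A pattern has full generic column rank as soon as it contains a matching that saturates the
columns: the `0/1` matrix `A` of such a matching satisfies `Aᵀ * A = 1`.

Such a matching exists here. The voltage columns of a metered bus `n` at slot `t` are served by
the `u` and `θ` equations of `n` at `t`. A non-metered bus `o` of the block `Obar k`, matched to
the copy `j` of a metered bus `m`, has its real part served at slot `2k` and its imaginary part
at slot `2k + 1` by the `j`-th power equation (`p` or `q`) of `m`; its remaining `T - 1` real
(imaginary) columns are served by the `T - 1` coupling `p` (`q`) equations of `o`.
-/

open Function Matrix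

theorem exists_supportedOn_rank_eq_card_of_injective {R C : Type*} [Fintype R] [Fintype C]
    {S : R → C → Prop} (φ : C → R) (hφ : Injective φ) (hS : ∀ c, S (φ c) c) :
    ∃ A : Matrix R C ℝ, SupportedOn S A ∧ A.rank = Fintype.card C := by
  classical
  refine ⟨(1 : Matrix R R ℝ).submatrix id φ, fun r c hrc => ?_, ?_⟩
  · obtain rfl : r = φ c := by
      by_contra hne
      exact hrc (one_apply_ne hne)
    exact hS c
  · have hgram : ((1 : Matrix R R ℝ).submatrix id φ)ᵀ * (1 : Matrix R R ℝ).submatrix id φ = 1 := by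
      rw [transpose_submatrix, transpose_one,
        ← submatrix_mul _ _ _ _ _ bijective_id, mul_one, submatrix_one φ hφ]
    rw [← rank_transpose_mul_self, hgram, rank_one]

theorem exists_injective_prod_of_iUnion_eq_univ {α β ι : Type*} {S : ι → Set α}
    (hS : ⋃ i, S i = Set.univ) {P : α → β → Prop}
    (hf : ∀ i, ∃ f : S i → β, Injective f ∧ ∀ a : S i, P a (f a)) :
    ∃ k : α → ι, ∃ g : α → β, Injective (fun a => (k a, g a)) ∧ ∀ a, P a (g a) := by
  choose f hf hP using hf
  choose k hk using fun a => Set.mem_iUnion.mp (hS ▸ Set.mem_univ a)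
  have hval : ∀ i j, i = j → ∀ (x : S i) (y : S j), f i x = f j y → (x : α) = y := by
    rintro i _ rfl x y hxy
    exact congrArg Subtype.val (hf i hxy)
  refine ⟨k, fun a => f (k a) ⟨a, hk a⟩, fun a b hab => ?_, fun a => hP (k a) ⟨a, hk a⟩⟩
  exact hval _ _ (Prod.ext_iff.mp hab).1 _ _ (Prod.ext_iff.mp hab).2

/-- The index `u` of the coupling equation (between slots `u` and `u + 1`) serving slot `t`
when slot `s` is served by a metering equation. -/
def couplingSlot (s t : ℕ) : ℕ := if t < s then t else t - 1

theorem couplingSlot_inj {s t t' : ℕ} (ht : t ≠ s) (ht' : t' ≠ s)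
    (h : couplingSlot s t = couplingSlot s t') : t = t' := by
  unfold couplingSlot at h; split_ifs at h <;> omega

theorem couplingSlot_lt {s t T : ℕ} (hs : s < T) (ht : t < T) (hts : t ≠ s) :
    couplingSlot s t < T - 1 := by
  unfold couplingSlot; split_ifs <;> omega

theorem eq_couplingSlot_or_eq_couplingSlot_add_one (s t : ℕ) :
    t = couplingSlot s t ∨ t = couplingSlot s t + 1 := by
  unfold couplingSlot; split_ifs <;> omega

section Assignment

variable {M O : Type*} {T : ℕ}

/-- `ρ (i, o) = (s, j, m)` reserves for part `i` of bus `o` the `j`-th power equation of `m` at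
slot `s`. -/
def phasorAssignment (ρ : Fin 2 × O → Fin T × Fin 2 × M) :
    Fin T × Fin 2 × (M ⊕ O) → (Fin T × Fin 4 × M) ⊕ (Fin (T - 1) × Fin 2 × O)
  | (t, i, .inl n) => .inl (t, Fin.castAdd 2 i, n)
  | (t, i, .inr o) =>
      if hts : t = (ρ (i, o)).1 then .inl (t, Fin.natAdd 2 (ρ (i, o)).2.1, (ρ (i, o)).2.2)
      else .inr (⟨couplingSlot (ρ (i, o)).1 t, couplingSlot_lt (ρ (i, o)).1.isLt t.isLt
        (Fin.val_injective.ne hts)⟩, i, o)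

theorem phasorAssignment_injective {ρ : Fin 2 × O → Fin T × Fin 2 × M} (hρ : Injective ρ) :
    Injective (phasorAssignment ρ) := by
  rintro ⟨t, i, n | o⟩ ⟨t', i', n' | o'⟩ heq
  · simp_all [phasorAssignment, Fin.ext_iff]
  · simp only [phasorAssignment] at heq
    split_ifs at heq
    simp only [Sum.inl.injEq, Prod.mk.injEq, Fin.ext_iff, Fin.val_castAdd, Fin.val_natAdd] at heq
    omega
  · simp only [phasorAssignment] at heq
    split_ifs at heq
    simp only [Sum.inl.injEq, Prod.mk.injEq, Fin.ext_iff, Fin.val_castAdd, Fin.val_natAdd] at heq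
    omega
  · simp only [phasorAssignment] at heq
    split_ifs at heq with hts hts' hts'
    · simp only [Sum.inl.injEq, Prod.mk.injEq] at heq
      obtain ⟨rfl, hj, hm⟩ := heq
      obtain ⟨rfl, rfl⟩ := Prod.ext_iff.mp <|
        @hρ (i, o) (i', o') (Prod.ext (hts ▸ hts') (Prod.ext (Fin.natAdd_injective 2 2 hj) hm))
      rfl
    · simp only [Sum.inr.injEq, Prod.mk.injEq, Fin.mk.injEq] at heq
      obtain ⟨hu, rfl, rfl⟩ := heq
      rw [Fin.ext (couplingSlot_inj (Fin.val_injective.ne hts) (Fin.val_injective.ne hts') hu)]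

theorem phasorPattern_phasorAssignment (adj : (M ⊕ O) → (M ⊕ O) → Prop)
    {ρ : Fin 2 × O → Fin T × Fin 2 × M} (hρ : ∀ p, adj (.inl (ρ p).2.2) (.inr p.2))
    (c : Fin T × Fin 2 × (M ⊕ O)) : PhasorPattern adj T (phasorAssignment ρ c) c := by
  obtain ⟨t, i, n | o⟩ := c
  · simp [phasorAssignment, PhasorPattern, adjDiag]
  · simp only [phasorAssignment]
    split_ifs with hts
    · simp [PhasorPattern, hts, adjDiag, hρ]
    · simp only [PhasorPattern, adjDiag, true_or, and_true]
      exact eq_couplingSlot_or_eq_couplingSlot_add_one _ _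

end Assignment

theorem p2l_phasor_generic_full_rank_general
    {M O : Type*} [Fintype M] [Fintype O]
    (adj : (M ⊕ O) → (M ⊕ O) → Prop)
    (hsymm : ∀ n m, adj n m → adj m n)
    (T : ℕ) (hTeven : Even T)
    (Obar : Fin (T / 2) → Set O)
    (hcover : (⋃ k, Obar k) = Set.univ)
    (hmatch : ∀ k, ∃ h : Obar k → M × Fin 2, Function.Injective h ∧
        ∀ o : Obar k, adj (Sum.inr (o : O)) (Sum.inl (h o).1)) :
    ∃ A : Matrix ((Fin T × Fin 4 × M) ⊕ (Fin (T - 1) × Fin 2 × O))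
        (Fin T × Fin 2 × (M ⊕ O)) ℝ,
      SupportedOn (PhasorPattern adj T) A ∧
      A.rank = 2 * T * (Fintype.card M + Fintype.card O) := by
  obtain ⟨k, g, hkg, hadj⟩ := exists_injective_prod_of_iUnion_eq_univ hcover
    (P := fun o (m : M × Fin 2) => adj (.inr o) (.inl m.1)) hmatch
  have hT : T / 2 * 2 = T := Nat.div_mul_cancel (even_iff_two_dvd.mp hTeven)
  let ρ : Fin 2 × O → Fin T × Fin 2 × M := fun p =>
    (Fin.cast hT (finProdFinEquiv (k p.2, p.1)), (g p.2).2, (g p.2).1)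
  have hρ : Injective ρ := by
    rintro ⟨i, o⟩ ⟨i', o'⟩ h
    simp only [ρ, Prod.mk.injEq, Fin.cast_inj, EmbeddingLike.apply_eq_iff_eq] at h
    obtain ⟨⟨hk, rfl⟩, hg₂, hg₁⟩ := h
    rw [hkg (Prod.ext hk (Prod.ext hg₁ hg₂))]
  obtain ⟨A, hA, hrank⟩ := exists_supportedOn_rank_eq_card_of_injective _
    (phasorAssignment_injective hρ)
    (phasorPattern_phasorAssignment adj fun p => hsymm _ _ (hadj p.2))
  refine ⟨A, hA, hrank.trans ?_⟩
  simp only [Fintype.card_prod, Fintype.card_sum, Fintype.card_fin]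
  ring

/-- Theorem 1: if the non-metered buses `O` can be partitioned into `T/2`
subsets, each perfectly matched to `M ∪ M′` on the bipartite grid graph,
then the P2L phasor pattern for `T` probing slots has full generic column
rank `2·T·(|M| + |O|)`. -/
theorem p2l_phasor_generic_full_rank
    {M O : Type*} [Fintype M] [Fintype O]
    (adj : (M ⊕ O) → (M ⊕ O) → Prop)
    (hsymm : ∀ n m, adj n m → adj m n)
    (hirr : ∀ n, ¬ adj n n)
    (T : ℕ) (hT : 2 ≤ T) (hTeven : Even T)
    (Obar : Fin (T / 2) → Set O)
    (hdisj : ∀ k l, k ≠ l → Disjoint (Obar k) (Obar l))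
    (hcover : (⋃ k, Obar k) = Set.univ)
    (hmatch : ∀ k, ∃ h : Obar k → M × Fin 2, Function.Injective h ∧
        ∀ o : Obar k, adj (Sum.inr (o : O)) (Sum.inl (h o).1)) :
    ∃ A : Matrix ((Fin T × Fin 4 × M) ⊕ (Fin (T - 1) × Fin 2 × O))
        (Fin T × Fin 2 × (M ⊕ O)) ℝ,
      SupportedOn (PhasorPattern adj T) A ∧
      A.rank = 2 * T * (Fintype.card M + Fintype.card O) :=
  p2l_phasor_generic_full_rank_general adj hsymm T hTeven Obar hcover hmatch
end

section
/- Fix an even integer T ≥ 2. Suppose the non-metered bus set O can be partitioned into T/2 pairwise disjoint subsets O̅_1, …, O̅_{T/2} with union O, such that for each k there exists an injective map h_k : O̅_k → M satisfying adj o (h_k o) for every o ∈ O̅_k (i.e., each O̅_k can be perfectly matched to M on the feeder graph). Then the P2L non-phasor pattern for T probing slots has full generic column rank; that is, there exists a real matrix supported on this pattern whose rank equals 2·T·(|M| + |O|). -/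
open Matrix


/-- The P2L sparsity pattern with non-phasor data for `T` probing slots.
Rows: metering equations `(t, τ, n)` with `τ ∈ {u, p, q}` (coded as `Fin 3`,
with `τ = 0` meaning `u`) at probed buses `n ∈ M`, and coupling equations
`(t, τ, n)` with `τ ∈ {p, q}` (coded as `Fin 2`) at non-metered buses `n ∈ O`
linking slots `t` and `t+1`.
Columns: `(t, i, m)` for the real/imaginary parts (`i : Fin 2`) of the voltage
of bus `m` at slot `t`. -/
def NonPhasorPattern {M O : Type*} (adj : (M ⊕ O) → (M ⊕ O) → Prop) (T : ℕ)
    (r : (Fin T × Fin 3 × M) ⊕ (Fin (T - 1) × Fin 2 × O))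
    (c : Fin T × Fin 2 × (M ⊕ O)) : Prop :=
  match r with
  | Sum.inl (t, τ, n) =>
      c.1 = t ∧ (if (τ : ℕ) = 0 then c.2.2 = Sum.inl n
                 else adjDiag adj (Sum.inl n) c.2.2)
  | Sum.inr (t, _, n) =>
      ((c.1 : ℕ) = (t : ℕ) ∨ (c.1 : ℕ) = (t : ℕ) + 1) ∧
        adjDiag adj (Sum.inr n) c.2.2

/-- Auxiliary injection from columns to rows of the P2L pattern. -/
def phiAux {M O : Type*} (T : ℕ) (K : O → ℕ) (mo : O → M)
    (hK : ∀ o, K o + 1 < T) :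
    Fin T × Fin 2 × (M ⊕ O) → (Fin T × Fin 3 × M) ⊕ (Fin (T - 1) × Fin 2 × O) :=
  fun c =>
    match c with
    | (t, i, Sum.inl n) => Sum.inl (t, ⟨(i : ℕ), by have := i.2; omega⟩, n)
    | (t, i, Sum.inr o) =>
        if h1 : (t : ℕ) < K o then
          Sum.inr (⟨(t : ℕ), by have := hK o; omega⟩, i, o)
        else if h2 : (t : ℕ) = K o then
          if i = 0 then Sum.inl (t, 2, mo o)
          else Sum.inr (⟨K o, by have := hK o; omega⟩, 0, o)
        else if h3 : (t : ℕ) = K o + 1 then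
          if i = 0 then Sum.inl (t, 2, mo o)
          else Sum.inr (⟨K o, by have := hK o; omega⟩, 1, o)
        else
          Sum.inr (⟨(t : ℕ) - 1, by have := t.2; omega⟩, i, o)

section Decode

variable {M O : Type*} {T : ℕ} {K : O → ℕ} {mo : O → M} {hK : ∀ o, K o + 1 < T}

lemma phiAux_inr_inl {t : Fin T} {i : Fin 2} {o : O} {r : Fin T × Fin 3 × M}
    (h : phiAux T K mo hK (t, i, Sum.inr o) = Sum.inl r) :
    i = 0 ∧ ((t : ℕ) = K o ∨ (t : ℕ) = K o + 1) ∧ r = (t, 2, mo o) := by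
  simp only [phiAux] at h
  split_ifs at h with h1 h2 h3 h4 h5
  · exact ⟨h3, Or.inl h2, (Sum.inl.inj h).symm⟩
  · exact ⟨h5, Or.inr h4, (Sum.inl.inj h).symm⟩

lemma phiAux_inr_inr {t : Fin T} {i : Fin 2} {o : O} {s : Fin (T - 1)} {τ : Fin 2}
    {o₁ : O} (h : phiAux T K mo hK (t, i, Sum.inr o) = Sum.inr (s, τ, o₁)) :
    o₁ = o ∧ (((s : ℕ) < K o ∧ (t : ℕ) = (s : ℕ) ∧ i = τ) ∨
              ((s : ℕ) = K o ∧ i = 1 ∧ (t : ℕ) = K o + (τ : ℕ)) ∨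
              ((s : ℕ) > K o ∧ (t : ℕ) = (s : ℕ) + 1 ∧ i = τ)) := by
  have hi2 := i.2
  simp only [phiAux] at h
  split_ifs at h with h1 h2 h3 h4 h5 <;>
    simp only [Sum.inr.injEq, Prod.mk.injEq] at h
  · obtain ⟨rfl, rfl, rfl⟩ := h
    exact ⟨rfl, Or.inl ⟨h1, rfl, rfl⟩⟩
  · obtain ⟨rfl, rfl, rfl⟩ := h
    have hv : (i : ℕ) ≠ 0 := fun hh => h3 (Fin.ext hh)
    refine ⟨rfl, Or.inr (Or.inl ⟨rfl, Fin.ext (show (i:ℕ) = 1 by omega), ?_⟩)⟩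
    show (t : ℕ) = K o + 0
    omega
  · obtain ⟨rfl, rfl, rfl⟩ := h
    have hv : (i : ℕ) ≠ 0 := fun hh => h5 (Fin.ext hh)
    refine ⟨rfl, Or.inr (Or.inl ⟨rfl, Fin.ext (show (i:ℕ) = 1 by omega), ?_⟩)⟩
    show (t : ℕ) = K o + 1
    omega
  · obtain ⟨rfl, rfl, rfl⟩ := h
    refine ⟨rfl, Or.inr (Or.inr ⟨show (t:ℕ) - 1 > K o by omega,
      show (t:ℕ) = (t:ℕ) - 1 + 1 by omega, rfl⟩)⟩

lemma phiAux_inl {t : Fin T} {i : Fin 2} {n : M} :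
    phiAux T K mo hK (t, i, Sum.inl n) =
      Sum.inl (t, ⟨(i : ℕ), by have := i.2; omega⟩, n) := rfl

end Decode

lemma phiAux_injective {M O : Type*} (T : ℕ) (K : O → ℕ) (mo : O → M)
    (hK : ∀ o, K o + 1 < T) (hEv : ∀ o, Even (K o))
    (hinj : ∀ o o', mo o = mo o' → K o = K o' → o = o') :
    Function.Injective (phiAux T K mo hK) := by
  rintro ⟨t, i, n⟩ ⟨t', i', n'⟩ h
  have hi2 := i.2; have hi2' := i'.2
  match n, n' with
  | Sum.inl a, Sum.inl b =>
    rw [phiAux_inl, phiAux_inl] at h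
    simp only [Sum.inl.injEq, Prod.mk.injEq, Fin.mk.injEq] at h
    obtain ⟨h1, h2, h3⟩ := h
    simp [h1, h3, Fin.ext_iff, h2]
  | Sum.inl a, Sum.inr o =>
    exfalso
    rw [phiAux_inl] at h
    obtain ⟨-, -, hr⟩ := phiAux_inr_inl h.symm
    have h2 : (i : ℕ) = 2 := congrArg (fun x => ((x.2.1 : Fin 3) : ℕ)) hr
    omega
  | Sum.inr o, Sum.inl a =>
    exfalso
    rw [phiAux_inl] at h
    obtain ⟨-, -, hr⟩ := phiAux_inr_inl h
    have h2 : (i' : ℕ) = 2 := congrArg (fun x => ((x.2.1 : Fin 3) : ℕ)) hr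
    omega
  | Sum.inr o, Sum.inr o' =>
    obtain ⟨ko, hko⟩ := hEv o; obtain ⟨ko', hko'⟩ := hEv o'
    match hrow : phiAux T K mo hK (t, i, Sum.inr o) with
    | Sum.inl r =>
      have hrow' : phiAux T K mo hK (t', i', Sum.inr o') = Sum.inl r := by
        rw [← h]; exact hrow
      obtain ⟨rfl, hto, rfl⟩ := phiAux_inr_inl hrow
      obtain ⟨rfl, hto', hr'⟩ := phiAux_inr_inl hrow'
      simp only [Prod.mk.injEq] at hr'
      obtain ⟨ht, -, hmoo⟩ := hr'
      have hKK : K o = K o' := by rw [Fin.ext_iff] at ht; omega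
      obtain rfl : o = o' := hinj _ _ hmoo hKK
      rw [ht]
    | Sum.inr (s, τ, o₁) =>
      have hrow' : phiAux T K mo hK (t', i', Sum.inr o') = Sum.inr (s, τ, o₁) := by
        rw [← h]; exact hrow
      obtain ⟨rfl, hd⟩ := phiAux_inr_inr hrow
      obtain ⟨rfl, hd'⟩ := phiAux_inr_inr hrow'
      have hτ2 := τ.2
      rcases hd with ⟨c1, c2, rfl⟩ | ⟨c1, rfl, c3⟩ | ⟨c1, c2, rfl⟩ <;>
        rcases hd' with ⟨d1, d2, rfl⟩ | ⟨d1, rfl, d3⟩ | ⟨d1, d2, rfl⟩ <;>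
        simp only [Prod.mk.injEq, Fin.ext_iff, Fin.val_one, Fin.val_zero,
          and_true, eq_self_iff_true] <;>
        omega

lemma phiAux_pattern {M O : Type*} (adj : (M ⊕ O) → (M ⊕ O) → Prop) (T : ℕ)
    (K : O → ℕ) (mo : O → M) (hK : ∀ o, K o + 1 < T)
    (hadj : ∀ o, adj (Sum.inl (mo o)) (Sum.inr o))
    (c : Fin T × Fin 2 × (M ⊕ O)) :
    NonPhasorPattern adj T (phiAux T K mo hK c) c := by
  obtain ⟨t, i, n⟩ := c
  match n with
  | Sum.inl a =>
    refine ⟨rfl, ?_⟩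
    split_ifs with h
    · rfl
    · exact Or.inl rfl
  | Sum.inr o =>
    simp only [phiAux]
    split_ifs with p1 p2 p3 p4 p5
    · exact ⟨Or.inl rfl, Or.inl rfl⟩
    · exact ⟨rfl, by rw [if_neg (by decide)]; exact Or.inr (hadj o)⟩
    · exact ⟨Or.inl p2, Or.inl rfl⟩
    · exact ⟨rfl, by rw [if_neg (by decide)]; exact Or.inr (hadj o)⟩
    · exact ⟨Or.inr (by show (t:ℕ) = K o + 1; omega), Or.inl rfl⟩
    · exact ⟨Or.inr (by show (t:ℕ) = (t:ℕ) - 1 + 1; omega), Or.inl rfl⟩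

lemma rank_indicator {R C : Type*} [Fintype R] [Fintype C] [DecidableEq R] [DecidableEq C]
    (φ : C → R) (hφ : Function.Injective φ) :
    (Matrix.of fun r c => if r = φ c then (1:ℝ) else 0).rank = Fintype.card C := by
  set A := Matrix.of fun (r : R) (c : C) => if r = φ c then (1:ℝ) else 0 with hA
  have hAA : Aᵀ * A = 1 := by
    ext c c'
    simp only [Matrix.mul_apply, Matrix.transpose_apply, Matrix.one_apply, hA,
      Matrix.of_apply]
    rcases eq_or_ne c c' with rfl | hne
    · rw [Finset.sum_eq_single (φ c)]
      · simp
      · intro r _ hr; rw [if_neg hr, zero_mul]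
      · simp
    · rw [if_neg hne]
      refine Finset.sum_eq_zero fun r _ => ?_
      rcases eq_or_ne r (φ c) with rfl | hr
      · rw [if_neg (fun hh => hne (hφ hh)), mul_zero]
      · rw [if_neg hr, zero_mul]
  refine le_antisymm A.rank_le_card_width ?_
  calc (Fintype.card C : ℕ) = (1 : Matrix C C ℝ).rank := Matrix.rank_one.symm
    _ = (Aᵀ * A).rank := by rw [hAA]
    _ ≤ A.rank := Matrix.rank_mul_le_right _ _

/-- Theorem 2: if the non-metered buses `O` can be partitioned into `T/2`
subsets, each perfectly matched to `M` on the feeder graph, then the P2L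
non-phasor pattern for `T` probing slots has full generic column rank
`2·T·(|M| + |O|)`. -/
theorem p2l_nonphasor_generic_full_rank
    {M O : Type*} [Fintype M] [Fintype O]
    (adj : (M ⊕ O) → (M ⊕ O) → Prop)
    (hsymm : ∀ n m, adj n m → adj m n)
    (hirr : ∀ n, ¬ adj n n)
    (T : ℕ) (hT : 2 ≤ T) (hTeven : Even T)
    (Obar : Fin (T / 2) → Set O)
    (hdisj : ∀ k l, k ≠ l → Disjoint (Obar k) (Obar l))
    (hcover : (⋃ k, Obar k) = Set.univ)
    (hmatch : ∀ k, ∃ h : Obar k → M, Function.Injective h ∧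
        ∀ o : Obar k, adj (Sum.inr (o : O)) (Sum.inl (h o))) :
    ∃ A : Matrix ((Fin T × Fin 3 × M) ⊕ (Fin (T - 1) × Fin 2 × O))
        (Fin T × Fin 2 × (M ⊕ O)) ℝ,
      SupportedOn (NonPhasorPattern adj T) A ∧
      A.rank = 2 * T * (Fintype.card M + Fintype.card O) := by

  classical
  have cover : ∀ o : O, ∃ k, o ∈ Obar k := fun o => by
    have h := Set.mem_univ o
    rw [← hcover] at h
    exact Set.mem_iUnion.mp h
  choose kk hkk using cover
  choose hfun hfinj hfadj using hmatch
  have hTT : T / 2 * 2 = T := Nat.div_two_mul_two_of_even hTeven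
  set K : O → ℕ := fun o => 2 * (kk o : ℕ) with hKdef
  have hKlt : ∀ o, K o + 1 < T := fun o => by
    have := (kk o).2; simp only [hKdef]; omega
  set mo : O → M := fun o => hfun (kk o) ⟨o, hkk o⟩ with hmodef
  have hEv : ∀ o, Even (K o) := fun o => ⟨(kk o : ℕ), by simp only [hKdef]; ring⟩
  have key : ∀ (k k' : Fin (T/2)) (h : k = k') (x : Obar k) (y : Obar k'),
      hfun k x = hfun k' y → (x : O) = (y : O) := by
    rintro k _ rfl x y hxy
    exact congrArg Subtype.val (hfinj k hxy)
  have hinj : ∀ o o', mo o = mo o' → K o = K o' → o = o' := by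
    intro o o' h1 h2
    have hkko : kk o = kk o' := Fin.ext (by simp only [hKdef] at h2; omega)
    exact key _ _ hkko _ _ h1
  have hadj : ∀ o, adj (Sum.inl (mo o)) (Sum.inr o) := fun o =>
    hsymm _ _ (hfadj (kk o) ⟨o, hkk o⟩)
  refine ⟨Matrix.of fun r c => if r = phiAux T K mo hKlt c then (1:ℝ) else 0, ?_, ?_⟩
  · intro r c hrc
    have hr : r = phiAux T K mo hKlt c := by
      by_contra hne; exact hrc (by simp [hne])
    subst hr
    exact phiAux_pattern adj T K mo hKlt hadj c
  · rw [rank_indicator _ (phiAux_injective T K mo hKlt hEv hinj)]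
    simp only [Fintype.card_prod, Fintype.card_sum, Fintype.card_fin]
    ring
end

section
/- Suppose there exists an injective map f : O → M with adj o (f o) for every o ∈ O (each non-metered bus is matched to one unique metered bus along a feeder line). Then the single-slot phasor pattern has full generic column rank; that is, there exists a real matrix supported on this pattern whose rank equals 2·(|M| + |O|). -/
/-- The single-slot phasor sparsity pattern.
Rows: metering equations `(τ, n)` with `τ ∈ {u, θ, p, q}` (coded as `Fin 4`,
with `τ < 2` meaning `u` or `θ`) at probed buses `n ∈ M`.
Columns: `(i, m)` for the real/imaginary parts (`i : Fin 2`) of the voltage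
of bus `m`. -/
def SingleSlotPhasorPattern {M O : Type*} (adj : (M ⊕ O) → (M ⊕ O) → Prop)
    (r : Fin 4 × M) (c : Fin 2 × (M ⊕ O)) : Prop :=
  if (r.1 : ℕ) < 2 then c.2 = Sum.inl r.2
  else adjDiag adj (Sum.inl r.2) c.2

/-!
A pattern admitting a matching, i.e. an injective choice of one allowed row per column, has
full generic column rank: the 0/1 matrix of the matching has distinct standard basis vectors
as columns.
For the phasor pattern, the real and imaginary parts of the voltage of a metered bus `n` are
matched to its own `u` and `θ` rows, and those of a non-metered bus `o` to the `p` and `q` rows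
of `f o`, which see `o` through the line joining the two buses.
-/

theorem Matrix.rank_submatrix_one_of_injective {K m n : Type*} [Field K] [Fintype m] [Fintype n]
    [DecidableEq m] {g : n → m} (hg : Function.Injective g) :
    ((1 : Matrix m m K).submatrix g id).rank = Fintype.card n :=
  LinearIndependent.rank_matrix ((Matrix.linearIndependent_rows_iff_isUnit.2 isUnit_one).comp g hg)

theorem exists_supportedOn_rank_eq_card_of_matching {R C : Type*} [Fintype R] [Fintype C]
    {S : R → C → Prop} {g : C → R} (hg : Function.Injective g) (hS : ∀ c, S (g c) c) :
    ∃ A : Matrix R C ℝ, SupportedOn S A ∧ A.rank = Fintype.card C := by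
  classical
  refine ⟨((1 : Matrix R R ℝ).submatrix g id).transpose, fun r c hrc => ?_, ?_⟩
  · obtain rfl : g c = r := by
      by_contra h
      exact hrc (Matrix.one_apply_ne h)
    exact hS c
  · rw [Matrix.rank_transpose, Matrix.rank_submatrix_one_of_injective hg]

section SingleSlotPhasor

variable {M O : Type*}

def phasorMatching (f : O → M) : Fin 2 × (M ⊕ O) → Fin 4 × M
  | (i, .inl n) => (Fin.castAdd 2 i, n)
  | (i, .inr o) => (Fin.natAdd 2 i, f o)

theorem phasorMatching_injective {f : O → M} (hf : Function.Injective f) :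
    Function.Injective (phasorMatching f) := by
  rintro ⟨i, n | o⟩ ⟨j, n' | o'⟩ h <;>
    simp only [phasorMatching, Prod.mk.injEq, Fin.ext_iff, Fin.val_castAdd, Fin.val_natAdd] at h
  · rw [Fin.ext h.1, h.2]
  · omega
  · omega
  · rw [Fin.ext (Nat.add_left_cancel h.1), hf h.2]

theorem singleSlotPhasorPattern_phasorMatching {adj : (M ⊕ O) → (M ⊕ O) → Prop}
    (hsymm : ∀ n m, adj n m → adj m n) {f : O → M}
    (hadj : ∀ o, adj (Sum.inr o) (Sum.inl (f o))) (c : Fin 2 × (M ⊕ O)) :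
    SingleSlotPhasorPattern adj (phasorMatching f c) c := by
  obtain ⟨i, n | o⟩ := c
  · simp [SingleSlotPhasorPattern, phasorMatching, adjDiag]
  · simpa [SingleSlotPhasorPattern, phasorMatching, adjDiag] using hsymm _ _ (hadj o)

end SingleSlotPhasor

theorem single_slot_phasor_generic_full_rank_general
    {M O : Type*} [Fintype M] [Fintype O]
    (adj : (M ⊕ O) → (M ⊕ O) → Prop)
    (hsymm : ∀ n m, adj n m → adj m n)
    (f : O → M) (hf : Function.Injective f)
    (hadj : ∀ o, adj (Sum.inr o) (Sum.inl (f o))) :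
    ∃ A : Matrix (Fin 4 × M) (Fin 2 × (M ⊕ O)) ℝ,
      SupportedOn (SingleSlotPhasorPattern adj) A ∧
      A.rank = 2 * (Fintype.card M + Fintype.card O) := by
  simpa [Fintype.card_prod, Fintype.card_sum] using
    exists_supportedOn_rank_eq_card_of_matching (phasorMatching_injective hf)
      (singleSlotPhasorPattern_phasorMatching hsymm hadj)

/-- Theorem 3: if each non-metered bus can be matched to one unique metered
bus along a feeder line, then the single-slot phasor pattern has full generic
column rank `2·(|M| + |O|)`. -/
theorem single_slot_phasor_generic_full_rank
    {M O : Type*} [Fintype M] [Fintype O]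
    (adj : (M ⊕ O) → (M ⊕ O) → Prop)
    (hsymm : ∀ n m, adj n m → adj m n)
    (hirr : ∀ n, ¬ adj n n)
    (f : O → M) (hf : Function.Injective f)
    (hadj : ∀ o, adj (Sum.inr o) (Sum.inl (f o))) :
    ∃ A : Matrix (Fin 4 × M) (Fin 2 × (M ⊕ O)) ℝ,
      SupportedOn (SingleSlotPhasorPattern adj) A ∧
      A.rank = 2 * (Fintype.card M + Fintype.card O) :=
  single_slot_phasor_generic_full_rank_general adj hsymm f hf hadj
end

section
/- Suppose there exists an injective map h : O × Fin 2 → M with adj o (h (o,i)) for every o ∈ O and i ∈ Fin 2 (each non-metered bus is matched to two unique metered buses along feeder lines, all matched metered buses being distinct). Then the single-slot non-phasor pattern has full generic column rank; that is, there exists a real matrix supported on this pattern whose rank equals 2·(|M| + |O|). -/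
/-- The single-slot non-phasor sparsity pattern.
Rows: metering equations `(τ, n)` with `τ ∈ {u, p, q}` (coded as `Fin 3`,
with `τ = 0` meaning `u`) at probed buses `n ∈ M`.
Columns: `(i, m)` for the real/imaginary parts (`i : Fin 2`) of the voltage
of bus `m`. -/
def SingleSlotNonPhasorPattern {M O : Type*} (adj : (M ⊕ O) → (M ⊕ O) → Prop)
    (r : Fin 3 × M) (c : Fin 2 × (M ⊕ O)) : Prop :=
  if (r.1 : ℕ) = 0 then c.2 = Sum.inl r.2
  else adjDiag adj (Sum.inl r.2) c.2

/-- Theorem 4: if each non-metered bus can be matched to two unique metered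
buses along feeder lines (all matched metered buses being distinct), then the
single-slot non-phasor pattern has full generic column rank `2·(|M| + |O|)`. -/
theorem single_slot_nonphasor_generic_full_rank
    {M O : Type*} [Fintype M] [Fintype O]
    (adj : (M ⊕ O) → (M ⊕ O) → Prop)
    (hsymm : ∀ n m, adj n m → adj m n)
    (hirr : ∀ n, ¬ adj n n)
    (h : O × Fin 2 → M) (hinj : Function.Injective h)
    (hadj : ∀ o i, adj (Sum.inr o) (Sum.inl (h (o, i)))) :
    ∃ A : Matrix (Fin 3 × M) (Fin 2 × (M ⊕ O)) ℝ,
      SupportedOn (SingleSlotNonPhasorPattern adj) A ∧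
      A.rank = 2 * (Fintype.card M + Fintype.card O) := by
  classical
  -- assign to each column a distinct pivot row
  set g : Fin 2 × (M ⊕ O) → Fin 3 × M := fun c =>
    match c with
    | (j, Sum.inl m) => (Fin.castLE (by norm_num) j, m)
    | (j, Sum.inr o) => (2, h (o, j))
    with hgdef
  have hg : Function.Injective g := by
    rintro ⟨j, (m | o)⟩ ⟨j', (m' | o')⟩ hgc <;>
      simp only [g, Prod.mk.injEq] at hgc
    · obtain ⟨h1, h2⟩ := hgc
      have : j = j' := Fin.castLE_injective _ h1
      simp [this, h2]
    · have := congrArg Fin.val hgc.1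
      simp at this
      omega
    · have := congrArg Fin.val hgc.1
      simp at this
      omega
    · have := hinj hgc.2
      simp_all
  refine ⟨fun r c => if r = g c then 1 else 0, ?_, ?_⟩
  · rintro ⟨τ, n⟩ ⟨j, c⟩ hA
    have hr : (τ, n) = g (j, c) := by
      by_contra hne
      simp [hne] at hA
    rcases c with m | o
    · simp only [g, Prod.mk.injEq] at hr
      obtain ⟨h1, h2⟩ := hr
      subst h2
      rcases Fin.exists_fin_two.mp ⟨j, rfl⟩ with _ | _
      all_goals
        unfold SingleSlotNonPhasorPattern
        subst h1
        fin_cases j <;> simp [adjDiag]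
    · simp only [g, Prod.mk.injEq] at hr
      obtain ⟨h1, h2⟩ := hr
      subst h1; subst h2
      unfold SingleSlotNonPhasorPattern
      simp [adjDiag, hsymm _ _ (hadj o j)]
  · set A : Matrix (Fin 3 × M) (Fin 2 × (M ⊕ O)) ℝ :=
      fun r c => if r = g c then 1 else 0 with hAdef
    have key : ∀ (v : Fin 2 × (M ⊕ O) → ℝ) (c), A.mulVec v (g c) = v c := by
      intro v c
      simp [A, Matrix.mulVec, dotProduct, hg.eq_iff, eq_comm]
    have hinjL : Function.Injective A.mulVecLin := by
      intro v w hvw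
      funext c
      simpa [Matrix.mulVecLin_apply, key] using congrArg (fun f => f (g c)) hvw
    have hrank : A.rank = Module.finrank ℝ (Fin 2 × (M ⊕ O) → ℝ) := by
      rw [Matrix.rank, LinearMap.finrank_range_of_inj hinjL]
    rw [hrank, Module.finrank_fintype_fun_eq_card]
    simp [Fintype.card_prod, Fintype.card_sum]
end

section
/- Let O_t ⊆ O and set O̅_t := O \ O_t. Suppose there exists an injective map h : O̅_t → M × Fin 2 with adj o ((h o).1) for every o ∈ O̅_t (the vertices of O̅_t can be matched to M ∪ M′ on the bipartite grid graph). Then the single-block pattern associated with O_t admits a perfect matching from its columns to its rows: there exists an injective map g : C → R such that every column c is related to the row g c in the pattern. -/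
/-- The single-block sparsity pattern associated with a subset `Ot ⊆ O`.
Rows: metering equations `(τ, n)` with `τ ∈ {u, θ, p, q}` (coded as `Fin 4`,
with `τ < 2` meaning `u` or `θ`) at probed buses `n ∈ M`, one coupling
equation per bus of `O`, and one additional coupling equation per bus of `Ot`.
Columns: `(i, m)` for the real/imaginary parts (`i : Fin 2`) of the voltage
of bus `m`. -/
def SingleBlockPattern {M O : Type*} (adj : (M ⊕ O) → (M ⊕ O) → Prop)
    (Ot : Set O)
    (r : (Fin 4 × M) ⊕ (O ⊕ Ot)) (c : Fin 2 × (M ⊕ O)) : Prop :=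
  match r with
  | Sum.inl (τ, n) =>
      if (τ : ℕ) < 2 then c.2 = Sum.inl n else adjDiag adj (Sum.inl n) c.2
  | Sum.inr (Sum.inl n) => adjDiag adj (Sum.inr n) c.2
  | Sum.inr (Sum.inr n) => adjDiag adj (Sum.inr (n : O)) c.2

/-- Lemma 2 (single-block matching): if the vertices of `O̅_t = O \ O_t` can be
matched to `M ∪ M′` on the bipartite grid graph, then the single-block pattern
associated with `O_t` admits a perfect matching from its columns to its rows. -/
theorem single_block_perfect_matching
    {M O : Type*} [Fintype M] [Fintype O]
    (adj : (M ⊕ O) → (M ⊕ O) → Prop)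
    (hsymm : ∀ n m, adj n m → adj m n)
    (hirr : ∀ n, ¬ adj n n)
    (Ot : Set O)
    (h : (Otᶜ : Set O) → M × Fin 2) (hinj : Function.Injective h)
    (hadj : ∀ o : (Otᶜ : Set O), adj (Sum.inr (o : O)) (Sum.inl (h o).1)) :
    ∃ g : (Fin 2 × (M ⊕ O)) → ((Fin 4 × M) ⊕ (O ⊕ Ot)),
      Function.Injective g ∧
      ∀ c, SingleBlockPattern adj Ot (g c) c := by
  classical
  refine ⟨fun c =>
    match c with
    | (i, Sum.inl m) => Sum.inl (Fin.castLE (by norm_num) i, m)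
    | (i, Sum.inr o) =>
      if i = 0 then Sum.inr (Sum.inl o)
      else if ho : o ∈ Ot then Sum.inr (Sum.inr ⟨o, ho⟩)
      else Sum.inl ((h ⟨o, ho⟩).2.succ.succ, (h ⟨o, ho⟩).1), ?_, ?_⟩
  · rintro ⟨i, x⟩ ⟨j, y⟩ heq
    rcases x with m | o <;> rcases y with m' | o' <;> dsimp only at heq
    · simp only [Sum.inl.injEq, Prod.mk.injEq] at heq
      obtain ⟨h1, h2⟩ := heq
      cases Fin.castLE_injective _ h1
      cases h2
      rfl
    · split_ifs at heq with hj ho'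
      all_goals try simp only [reduceCtorEq] at heq
      all_goals
        simp only [Sum.inl.injEq, Prod.mk.injEq] at heq
        have h1 := congrArg Fin.val heq.1
        have h2 := i.isLt
        simp only [Fin.coe_castLE, Fin.val_succ] at h1
        omega
    · split_ifs at heq with hi ho
      all_goals try simp only [reduceCtorEq] at heq
      all_goals
        simp only [Sum.inl.injEq, Prod.mk.injEq] at heq
        have h1 := congrArg Fin.val heq.1
        have h2 := j.isLt
        simp only [Fin.coe_castLE, Fin.val_succ] at h1
        omega
    · by_cases hi : i = 0 <;> by_cases hj : j = 0
      · rw [if_pos hi, if_pos hj] at heq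
        simp only [Sum.inr.injEq, Sum.inl.injEq] at heq
        rw [hi, hj, heq]
      · rw [if_pos hi, if_neg hj] at heq
        by_cases ho' : o' ∈ Ot
        · rw [dif_pos ho'] at heq; simp at heq
        · rw [dif_neg ho'] at heq; simp at heq
      · rw [if_neg hi, if_pos hj] at heq
        by_cases ho : o ∈ Ot
        · rw [dif_pos ho] at heq; simp at heq
        · rw [dif_neg ho] at heq; simp at heq
      · have hij : i = j := by omega
        rw [if_neg hi, if_neg hj] at heq
        by_cases ho : o ∈ Ot <;> by_cases ho' : o' ∈ Ot
        · rw [dif_pos ho, dif_pos ho'] at heq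
          simp only [Sum.inr.injEq, Subtype.mk.injEq] at heq
          rw [hij, heq]
        · rw [dif_pos ho, dif_neg ho'] at heq; simp at heq
        · rw [dif_neg ho, dif_pos ho'] at heq; simp at heq
        · rw [dif_neg ho, dif_neg ho'] at heq
          simp only [Sum.inl.injEq, Prod.mk.injEq] at heq
          obtain ⟨h1, h2⟩ := heq
          have h1' : (h ⟨o, ho⟩).2 = (h ⟨o', ho'⟩).2 :=
            Fin.succ_injective _ (Fin.succ_injective _ h1)
          have heo : (⟨o, ho⟩ : (Otᶜ : Set O)) = ⟨o', ho'⟩ :=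
            hinj (Prod.ext h2 h1')
          have : o = o' := congrArg Subtype.val heo
          rw [hij, this]
  · rintro ⟨i, x⟩
    rcases x with m | o <;> dsimp only
    · simp only [SingleBlockPattern]
      rw [if_pos (by simpa using i.isLt)]
      trivial
    · by_cases hi : i = 0
      · rw [if_pos hi]
        exact Or.inl rfl
      · rw [if_neg hi]
        by_cases ho : o ∈ Ot
        · rw [dif_pos ho]
          exact Or.inl rfl
        · rw [dif_neg ho]
          simp only [SingleBlockPattern]
          rw [if_neg (by simp)]
          exact Or.inr (hsymm _ _ (hadj ⟨o, ho⟩))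
end

section
/- Fix an even integer T ≥ 2 and a partition of the finite set O into T/2 pairwise disjoint subsets O̅_1, …, O̅_{T/2} with union O; set O_k := O \ O̅_k for each k. For each pair of consecutive blocks (t, t+1) with 1 ≤ t ≤ T−1 and each n ∈ O there are exactly two coupling equations, each of which must be assigned to block t or to block t+1. Then there exists an assignment x : {1,…,T−1} × O → {0,1,2} (x(t,n) being the number of the two coupling equations of bus n in pair (t,t+1) assigned to block t, the remaining 2 − x(t,n) going to block t+1) such that for every block s ∈ {1,…,T} and every n ∈ O, the total number of coupling equations of bus n assigned to block s — namely x(s,n)·[s ≤ T−1] + (2 − x(s−1,n))·[s ≥ 2] — equals 2 if n ∈ O_{⌈s/2⌉} and equals 1 if n ∈ O̅_{⌈s/2⌉}. (In words: the coupling equations assigned to the two successive blocks s = 2k−1 and s = 2k have the sparsity pattern of the multiset O ∪ O_k.) -/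
/-!
A bus `n ∈ O̅_k` must receive one coupling equation in blocks `2k−1` and `2k` and two in every
other block. Sending both equations of pair `(t, t+1)` to block `t` while `t < 2k−1`, one to each
side when `t = 2k−1`, and both to block `t+1` when `t ≥ 2k` achieves exactly that; the partition
property tells each bus which `k` to use.
-/

/-- How many of its two equations of pair `(t, t+1)` a bus of `O̅_k` sends to block `t`. -/
def couplingAllocation (k t : ℕ) : ℕ := min 2 (2 * k - t)

theorem couplingAllocation_le_two (k t : ℕ) : couplingAllocation k t ≤ 2 :=
  min_le_left _ _

theorem couplingAllocation_count {T k s : ℕ} (hk : 1 ≤ k) (hkT : 2 * k ≤ T)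
    (hs : 1 ≤ s) (hsT : s ≤ T) :
    (if s ≤ T - 1 then couplingAllocation k s else 0) +
        (if 2 ≤ s then 2 - couplingAllocation k (s - 1) else 0) =
      if (s + 1) / 2 = k then 1 else 2 := by
  unfold couplingAllocation
  split_ifs <;> omega

theorem exists_index_of_pairwiseDisjoint_of_biUnion_eq_univ {α ι : Type*} {I : Set ι}
    {A : ι → Set α} (hdisj : I.PairwiseDisjoint A) (hcover : ⋃ i ∈ I, A i = Set.univ) :
    ∃ κ : α → ι, ∀ a, κ a ∈ I ∧ ∀ i ∈ I, a ∈ A i ↔ i = κ a := by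
  have hex : ∀ a, ∃ i ∈ I, a ∈ A i := fun a => by
    obtain ⟨i, hi, ha⟩ := Set.mem_iUnion₂.mp (hcover ▸ Set.mem_univ a)
    exact ⟨i, hi, ha⟩
  choose κ hκI hκA using hex
  refine ⟨κ, fun a => ⟨hκI a, fun i hi => ⟨fun ha => ?_, fun h => h ▸ hκA a⟩⟩⟩
  by_contra hne
  exact Set.disjoint_left.mp (hdisj hi (hκI a) hne) ha (hκA a)

open Classical in
theorem coupling_equation_allocation_general
    {O : Type*} (T : ℕ) (hTeven : Even T)
    (Obar : ℕ → Set O)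
    (hdisj : ∀ k l, 1 ≤ k → k ≤ T / 2 → 1 ≤ l → l ≤ T / 2 → k ≠ l →
      Disjoint (Obar k) (Obar l))
    (hcover : (⋃ k ∈ Finset.Icc 1 (T / 2), Obar k) = Set.univ) :
    ∃ x : ℕ → O → ℕ,
      (∀ t n, 1 ≤ t → t ≤ T - 1 → x t n ≤ 2) ∧
      ∀ s, 1 ≤ s → s ≤ T → ∀ n : O,
        (if s ≤ T - 1 then x s n else 0) +
          (if 2 ≤ s then 2 - x (s - 1) n else 0) =
        (if n ∈ Obar ((s + 1) / 2) then 1 else 2) := by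
  have hpairwise : (↑(Finset.Icc 1 (T / 2)) : Set ℕ).PairwiseDisjoint Obar :=
    fun k hk l hl hne => by
      simp only [Finset.coe_Icc, Set.mem_Icc] at hk hl
      exact hdisj k l hk.1 hk.2 hl.1 hl.2 hne
  obtain ⟨κ, hκ⟩ := exists_index_of_pairwiseDisjoint_of_biUnion_eq_univ hpairwise
    (by simpa only [Finset.mem_coe] using hcover)
  refine ⟨fun t n => couplingAllocation (κ n) t,
    fun t n _ _ => couplingAllocation_le_two _ _, fun s hs hsT n => ?_⟩
  obtain ⟨hκI, hmem⟩ := hκ n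
  -- `⌈s/2⌉ ≤ T/2` for `s ≤ T` needs `T` even.
  obtain ⟨m, rfl⟩ := hTeven
  simp only [Finset.coe_Icc, Set.mem_Icc] at hκI hmem
  rw [couplingAllocation_count hκI.1 (by omega) hs hsT,
    propext (hmem _ ⟨by omega, by omega⟩)]
  congr

open Classical in
/-- Lemma (allocation of coupling equations): given an even `T ≥ 2` and a
partition of the non-metered buses `O` into `T/2` subsets `O̅_1, …, O̅_{T/2}`
(with `O_k := O \ O̅_k`), the two coupling equations of each bus `n ∈ O` in
each pair `(t, t+1)` of consecutive blocks can be split between blocks `t`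
and `t+1` so that each block `s` receives, for every bus `n`, exactly two
coupling equations of bus `n` if `n ∈ O_{⌈s/2⌉}` and exactly one if
`n ∈ O̅_{⌈s/2⌉}`; i.e., the coupling equations assigned to the successive
blocks `2k−1` and `2k` have the sparsity pattern of the multiset `O ∪ O_k`. -/
theorem coupling_equation_allocation
    {O : Type*} [Fintype O] (T : ℕ) (hT : 2 ≤ T) (hTeven : Even T)
    (Obar : ℕ → Set O)
    (hdisj : ∀ k l, 1 ≤ k → k ≤ T / 2 → 1 ≤ l → l ≤ T / 2 → k ≠ l →
      Disjoint (Obar k) (Obar l))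
    (hcover : (⋃ k ∈ Finset.Icc 1 (T / 2), Obar k) = Set.univ) :
    ∃ x : ℕ → O → ℕ,
      (∀ t n, 1 ≤ t → t ≤ T - 1 → x t n ≤ 2) ∧
      ∀ s, 1 ≤ s → s ≤ T → ∀ n : O,
        (if s ≤ T - 1 then x s n else 0) +
          (if 2 ≤ s then 2 - x (s - 1) n else 0) =
        (if n ∈ Obar ((s + 1) / 2) then 1 else 2) :=
  coupling_equation_allocation_general T hTeven Obar hdisj hcover
end

section
/- Let d := max over m ∈ M of the number of buses o ∈ O with adj o m, and assume d ≥ 1. If for some integer k ≥ 1 the set O can be partitioned into k pairwise disjoint subsets with union O, each admitting an injective map into M × Fin 2 whose first component is adjacent (i.e., for each subset O̅ there is an injective h : O̅ → M × Fin 2 with adj o ((h o).1) for all o ∈ O̅), then O can be partitioned into ⌈d/2⌉ such subsets. (In words: with phasor data, a probing setup that is not successful for T = δ_M − 1 probing actions, where δ_M − 1 = d, cannot turn successful for any larger number of probing actions.) -/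
/-!
Every non-metered bus lies in some matched part, so it has an adjacent metered bus; fix one,
`f o`. A metered bus `m` is chosen by at most `d` buses, so numbering each fibre of `f` gives an
injective labelling `o ↦ (f o, r o) ∈ M × Fin d`. Grouping the labels `0, …, d - 1` in
consecutive pairs `{2i, 2i + 1}` yields `⌈d/2⌉` parts, each matched into `M × Fin 2` by
`o ↦ (f o, r o mod 2)`.
-/

open Finset Function

section Labelling

variable {α β : Type*}

theorem exists_injective_prod_fin_of_card_fiber_le [Fintype α] [DecidableEq β]
    (f : α → β) {n : ℕ} (hf : ∀ b, Fintype.card {a // f a = b} ≤ n) :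
    ∃ r : α → Fin n, Injective fun a => (f a, r a) := by
  have e : ∀ b, {a // f a = b} ↪ Fin n := fun b =>
    Classical.choice (Embedding.nonempty_of_card_le (by simpa using hf b))
  have he : ∀ b a (ha : f a = b), e b ⟨a, ha⟩ = e (f a) ⟨a, rfl⟩ := by
    rintro b a rfl
    rfl
  refine ⟨fun a => e (f a) ⟨a, rfl⟩, fun a a' h => ?_⟩
  obtain ⟨hfa, hra⟩ := Prod.mk.inj h
  have : e (f a) ⟨a', hfa.symm⟩ = e (f a) ⟨a, rfl⟩ := (he _ a' _).trans hra.symm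
  exact (congrArg Subtype.val ((e (f a)).injective this)).symm

theorem exists_partition_injective_prod_fin_two (f : α → β) {n : ℕ} (r : α → Fin n)
    (hinj : Injective fun a => (f a, r a)) :
    ∃ Q : Fin ((n + 1) / 2) → Set α,
      (∀ i j, i ≠ j → Disjoint (Q i) (Q j)) ∧
      (⋃ i, Q i) = Set.univ ∧
      ∀ j, ∃ h : Q j → β × Fin 2, Injective h ∧ ∀ a : Q j, (h a).1 = f a := by
  refine ⟨fun i => {a | (r a : ℕ) / 2 = i}, fun i j hij => ?_, ?_, fun j => ?_⟩
  · exact Set.disjoint_left.mpr fun a hi hj => hij (Fin.ext (hi.symm.trans hj))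
  · refine Set.eq_univ_of_forall fun a => Set.mem_iUnion.mpr ?_
    exact ⟨⟨r a / 2, by omega⟩, rfl⟩
  · refine ⟨fun a => (f a, ⟨r a % 2, Nat.mod_lt _ two_pos⟩), fun a b hab => ?_, fun _ => rfl⟩
    obtain ⟨hf, hmod⟩ := Prod.mk.inj hab
    have hdiv : (r a : ℕ) / 2 = r b / 2 := a.2.trans b.2.symm
    have hmod : (r a : ℕ) % 2 = r b % 2 := congrArg Fin.val hmod
    have hr : r a = r b := Fin.ext (by omega)
    exact Subtype.ext (hinj (Prod.ext hf hr))

end Labelling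

theorem phasor_probing_Tmax_general
    {M O : Type*} [Fintype M] [Fintype O]
    (adj : (M ⊕ O) → (M ⊕ O) → Prop) [DecidableRel adj]
    (d : ℕ)
    (hd : d = Finset.univ.sup fun m : M =>
      (Finset.univ.filter fun o : O => adj (Sum.inr o) (Sum.inl m)).card)
    (k : ℕ)
    (P : Fin k → Set O)
    (hcover : (⋃ i, P i) = Set.univ)
    (hmatch : ∀ j, ∃ h : P j → M × Fin 2, Function.Injective h ∧
        ∀ o : P j, adj (Sum.inr (o : O)) (Sum.inl (h o).1)) :
    ∃ Q : Fin ((d + 1) / 2) → Set O,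
      (∀ i j, i ≠ j → Disjoint (Q i) (Q j)) ∧
      (⋃ i, Q i) = Set.univ ∧
      ∀ j, ∃ h : Q j → M × Fin 2, Function.Injective h ∧
        ∀ o : Q j, adj (Sum.inr (o : O)) (Sum.inl (h o).1) := by
  classical
  have hadj : ∀ o : O, ∃ m : M, adj (Sum.inr o) (Sum.inl m) := fun o => by
    obtain ⟨i, hi⟩ := Set.mem_iUnion.mp (hcover ▸ Set.mem_univ o)
    obtain ⟨h, -, hh⟩ := hmatch i
    exact ⟨_, hh ⟨o, hi⟩⟩
  choose f hf using hadj
  have hfiber : ∀ m, Fintype.card {o // f o = m} ≤ d := fun m => calc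
    _ = #{o | f o = m} := Fintype.card_subtype _
    _ ≤ #{o | adj (Sum.inr o) (Sum.inl m)} :=
      card_le_card fun o => by simpa using fun h : f o = m => h ▸ hf o
    _ ≤ d := hd ▸ le_sup (f := fun m => #{o | adj (Sum.inr o) (Sum.inl m)}) (mem_univ m)
  obtain ⟨r, hr⟩ := exists_injective_prod_fin_of_card_fiber_le f hfiber
  obtain ⟨Q, hdisj, hQ, hmatchQ⟩ := exists_partition_injective_prod_fin_two f r hr
  refine ⟨Q, hdisj, hQ, fun j => ?_⟩
  obtain ⟨h, hinj, hfst⟩ := hmatchQ j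
  exact ⟨h, hinj, fun o => hfst o ▸ hf o⟩

/-- Lemma 3 (bound on useful probing actions, phasor data): let `d` be the
maximum, over metered buses `m ∈ M`, of the number of non-metered buses
adjacent to `m`, and assume `d ≥ 1`. If `O` can be partitioned into `k`
subsets each perfectly matched to `M ∪ M′` (i.e. injectively into `M × Fin 2`
along adjacency), then `O` can already be partitioned into `⌈d/2⌉` such
subsets: a probing setup with phasor data cannot turn successful beyond
`T_max = d = δ_M − 1` probing actions. -/
theorem phasor_probing_Tmax
    {M O : Type*} [Fintype M] [Fintype O]
    (adj : (M ⊕ O) → (M ⊕ O) → Prop) [DecidableRel adj]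
    (hsymm : ∀ n m, adj n m → adj m n)
    (hirr : ∀ n, ¬ adj n n)
    (d : ℕ)
    (hd : d = Finset.univ.sup fun m : M =>
      (Finset.univ.filter fun o : O => adj (Sum.inr o) (Sum.inl m)).card)
    (hd1 : 1 ≤ d)
    (k : ℕ) (hk : 1 ≤ k)
    (P : Fin k → Set O)
    (hdisj : ∀ i j, i ≠ j → Disjoint (P i) (P j))
    (hcover : (⋃ i, P i) = Set.univ)
    (hmatch : ∀ j, ∃ h : P j → M × Fin 2, Function.Injective h ∧
        ∀ o : P j, adj (Sum.inr (o : O)) (Sum.inl (h o).1)) :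
    ∃ Q : Fin ((d + 1) / 2) → Set O,
      (∀ i j, i ≠ j → Disjoint (Q i) (Q j)) ∧
      (⋃ i, Q i) = Set.univ ∧
      ∀ j, ∃ h : Q j → M × Fin 2, Function.Injective h ∧
        ∀ o : Q j, adj (Sum.inr (o : O)) (Sum.inl (h o).1) :=
  phasor_probing_Tmax_general adj d hd k P hcover hmatch
end

section
/- Let d := max over m ∈ M of the number of buses o ∈ O with adj o m, and assume d ≥ 1. If for some integer k ≥ 1 the set O can be partitioned into k pairwise disjoint subsets with union O, each admitting an injective map into M along adjacency (i.e., for each subset O̅ there is an injective h : O̅ → M with adj o (h o) for all o ∈ O̅), then O can be partitioned into d such subsets. (In words: with non-phasor data, a probing setup that is not successful for T = 2(δ_M − 1) probing actions, where δ_M − 1 = d, cannot turn successful for any larger number of probing actions.) -/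
/-- Corollary 1 (bound on useful probing actions, non-phasor data): let `d` be
the maximum, over metered buses `m ∈ M`, of the number of non-metered buses
adjacent to `m`, and assume `d ≥ 1`. If `O` can be partitioned into `k`
subsets each perfectly matched to `M` (injectively into `M` along adjacency),
then `O` can already be partitioned into `d` such subsets: a probing setup
with non-phasor data cannot turn successful beyond
`T_max = 2·d = 2(δ_M − 1)` probing actions. -/
theorem nonphasor_probing_Tmax
    {M O : Type*} [Fintype M] [Fintype O]
    (adj : (M ⊕ O) → (M ⊕ O) → Prop) [DecidableRel adj]
    (hsymm : ∀ n m, adj n m → adj m n)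
    (hirr : ∀ n, ¬ adj n n)
    (d : ℕ)
    (hd : d = Finset.univ.sup fun m : M =>
      (Finset.univ.filter fun o : O => adj (Sum.inr o) (Sum.inl m)).card)
    (hd1 : 1 ≤ d)
    (k : ℕ) (hk : 1 ≤ k)
    (P : Fin k → Set O)
    (hdisj : ∀ i j, i ≠ j → Disjoint (P i) (P j))
    (hcover : (⋃ i, P i) = Set.univ)
    (hmatch : ∀ j, ∃ h : P j → M, Function.Injective h ∧
        ∀ o : P j, adj (Sum.inr (o : O)) (Sum.inl (h o))) :
    ∃ Q : Fin d → Set O,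
      (∀ i j, i ≠ j → Disjoint (Q i) (Q j)) ∧
      (⋃ i, Q i) = Set.univ ∧
      ∀ j, ∃ h : Q j → M, Function.Injective h ∧
        ∀ o : Q j, adj (Sum.inr (o : O)) (Sum.inl (h o)) := by
  classical
  have hmem : ∀ o : O, ∃ i, o ∈ P i := by
    intro o
    have : o ∈ ⋃ i, P i := hcover ▸ Set.mem_univ o
    simpa using this
  choose idx hidx using hmem
  choose h hinj hadj using hmatch
  set f : O → M := fun o => h (idx o) ⟨o, hidx o⟩ with hf
  have hfadj : ∀ o, adj (Sum.inr o) (Sum.inl (f o)) := fun o => hadj (idx o) ⟨o, hidx o⟩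
  set e := Fintype.equivFin O with he
  set F : M → Finset O := fun m => Finset.univ.filter fun o => f o = m with hF
  have hFcard : ∀ m, (F m).card ≤ d := by
    intro m
    have hsub : F m ⊆ Finset.univ.filter fun o : O => adj (Sum.inr o) (Sum.inl m) := by
      intro o ho
      simp only [hF, Finset.mem_filter] at ho ⊢
      exact ⟨ho.1, ho.2 ▸ hfadj o⟩
    calc (F m).card ≤ _ := Finset.card_le_card hsub
      _ ≤ d := hd ▸ Finset.le_sup (f := fun m : M => (Finset.univ.filter fun o : O => adj (Sum.inr o) (Sum.inl m)).card) (Finset.mem_univ m)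
  set r : O → ℕ := fun o => ((F (f o)).filter fun o' => e o' < e o).card with hr
  have hrlt : ∀ o, r o < d := by
    intro o
    have hoF : o ∈ F (f o) := by simp [hF]
    have hsub : (F (f o)).filter (fun o' => e o' < e o) ⊆ (F (f o)).erase o := by
      intro x hx
      simp only [Finset.mem_filter] at hx
      refine Finset.mem_erase.2 ⟨?_, hx.1⟩
      rintro rfl; exact lt_irrefl _ hx.2
    calc r o ≤ ((F (f o)).erase o).card := Finset.card_le_card hsub
      _ < (F (f o)).card := Finset.card_erase_lt_of_mem hoF
      _ ≤ d := hFcard _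
  have haux : ∀ o o', f o = f o' → e o < e o' → r o < r o' := by
    intro o o' hfo hlt
    apply Finset.card_lt_card
    constructor
    · intro x hx
      simp only [Finset.mem_filter] at hx ⊢
      rw [← hfo]
      exact ⟨hx.1, hx.2.trans hlt⟩
    · intro hsub
      have hoF : o ∈ (F (f o')).filter fun o'' => e o'' < e o' := by
        simp [hF, hfo, hlt]
      have := hsub hoF
      simp only [Finset.mem_filter] at this
      exact lt_irrefl _ this.2
  have hkey : ∀ o o', f o = f o' → r o = r o' → o = o' := by
    intro o o' hfo hro
    by_contra hne
    have hne' : e o ≠ e o' := fun hh => hne (e.injective hh)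
    rcases hne'.lt_or_gt with hlt | hlt
    · exact absurd hro (haux o o' hfo hlt).ne
    · exact absurd hro.symm (haux o' o hfo.symm hlt).ne
  refine ⟨fun i => {o | r o = i.val}, ?_, ?_, ?_⟩
  · intro i j hij
    rw [Set.disjoint_left]
    intro o hi hj
    exact hij (Fin.ext (hi ▸ hj ▸ rfl))
  · ext o
    simp only [Set.mem_iUnion, Set.mem_univ, iff_true]
    exact ⟨⟨r o, hrlt o⟩, rfl⟩
  · intro j
    refine ⟨fun o => f o.val, ?_, fun o => hfadj o.val⟩
    intro o o' hoo
    exact Subtype.ext (hkey o.val o'.val hoo (o.2.trans o'.2.symm))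
end

section
/- Let c ≥ 1 and k ≥ 1 be integers. The following are equivalent: (i) O can be partitioned into k pairwise disjoint subsets O̅_1, …, O̅_k with union O such that for each j there exists an injective map h_j : O̅_j → M × Fin c with adj o ((h_j o).1) for every o ∈ O̅_j; (ii) there exists a map f : O → M with adj o (f o) for every o ∈ O such that every fiber of f has at most c·k elements, i.e., for every m ∈ M the number of o ∈ O with f o = m is at most c·k. (This equivalence underlies the correctness of testing a probing setup by a maximum-flow computation with edge capacities c·k on the sink-side edges of the bipartite grid graph: the flow value O is attainable exactly when the partition-and-matching condition holds.) -/
/-!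
A partition of `O` into `k` blocks, each matched injectively into `M × Fin c`, is the same as
a block label `O → Fin k` together with an adjacency-respecting map `s : O → M × Fin c` such
that `o ↦ (s o, label o)` is injective. Reassociating, this is a map `f : O → M` with a tag
`O → Fin c × Fin k` that separates the points of each fiber of `f`, and such a tag exists
exactly when every fiber has at most `c * k` elements.
-/

open Finset Function

theorem card_filter_fiber_le_iff_exists_injective_prodMk {α β γ : Type*} [Fintype α]
    [Fintype γ] [DecidableEq β] (f : α → β) :
    (∀ b, #{a | f a = b} ≤ Fintype.card γ) ↔ ∃ g : α → γ, Injective fun a => (f a, g a) := by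
  constructor
  · intro hcard
    have e : ∀ b, {a // f a = b} ↪ γ := fun b =>
      (Embedding.nonempty_of_card_le (by rw [Fintype.card_subtype]; exact hcard b)).some
    let F : (Σ b, {a // f a = b}) → β × γ := fun x => (x.1, e x.1 x.2)
    have hF : Injective F := by
      rintro ⟨b, x⟩ ⟨b', y⟩ hxy
      obtain ⟨rfl, hxy⟩ := Prod.mk.inj hxy
      exact congrArg _ ((e b).injective hxy)
    exact ⟨fun a => e (f a) ⟨a, rfl⟩, hF.comp (Equiv.sigmaFiberEquiv f).symm.injective⟩
  · rintro ⟨g, hg⟩ b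
    calc #{a | f a = b} ≤ #(univ : Finset γ) :=
          card_le_card_of_injOn g (fun _ _ => mem_univ _) fun a ha a' ha' h =>
            hg (Prod.ext ((mem_filter.1 ha).2.trans (mem_filter.1 ha').2.symm) h)
      _ = Fintype.card γ := card_univ

theorem exists_partition_matchable_iff {α β ι : Type*} (p : α → β → Prop) :
    (∃ P : ι → Set α, (∀ i j, i ≠ j → Disjoint (P i) (P j)) ∧ (⋃ i, P i) = Set.univ ∧
      ∀ i, ∃ h : P i → β, Injective h ∧ ∀ a : P i, p a (h a)) ↔
    ∃ (label : α → ι) (h : α → β), (∀ a, p a (h a)) ∧ Injective fun a => (h a, label a) := by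
  constructor
  · rintro ⟨P, -, hcover, hmatch⟩
    choose H hHinj hHp using hmatch
    have hmem : ∀ a, ∃ i, a ∈ P i := fun a => Set.mem_iUnion.1 (hcover ▸ Set.mem_univ a)
    choose label hlabel using hmem
    have hH : ∀ i a (ha : a ∈ P i), i = label a → H i ⟨a, ha⟩ = H (label a) ⟨a, hlabel a⟩ := by
      rintro i a ha rfl
      rfl
    refine ⟨label, fun a => H (label a) ⟨a, hlabel a⟩, fun a => hHp (label a) ⟨a, hlabel a⟩,
      fun a a' haa' => ?_⟩
    obtain ⟨hh, hl⟩ := Prod.mk.inj haa'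
    have ha' : a' ∈ P (label a) := hl ▸ hlabel a'
    exact congrArg Subtype.val (hHinj _ (hh.trans (hH (label a) a' ha' hl).symm))
  · rintro ⟨label, h, hp, hinj⟩
    refine ⟨fun i => {a | label a = i}, ?_, ?_, fun i => ⟨fun a => h a, ?_, fun a => hp a⟩⟩
    · exact fun i j hij => Set.disjoint_left.2 fun a hi hj => hij (hi.symm.trans hj)
    · exact Set.eq_univ_of_forall fun a => Set.mem_iUnion.2 ⟨label a, rfl⟩
    · exact fun a a' haa' => Subtype.ext (hinj (Prod.ext haa' (a.2.trans a'.2.symm)))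

theorem partition_matching_iff_capacitated_assignment_general
    {M O : Type*} [Fintype O] [DecidableEq M]
    (adj : (M ⊕ O) → (M ⊕ O) → Prop)
    (c k : ℕ) :
    (∃ P : Fin k → Set O,
      (∀ i j, i ≠ j → Disjoint (P i) (P j)) ∧
      (⋃ i, P i) = Set.univ ∧
      ∀ j, ∃ h : P j → M × Fin c, Function.Injective h ∧
        ∀ o : P j, adj (Sum.inr (o : O)) (Sum.inl (h o).1)) ↔
    (∃ f : O → M,
      (∀ o, adj (Sum.inr o) (Sum.inl (f o))) ∧
      ∀ m, (Finset.univ.filter fun o => f o = m).card ≤ c * k) := by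
  have hcard : Fintype.card (Fin c × Fin k) = c * k := by simp
  simp_rw [← hcard, card_filter_fiber_le_iff_exists_injective_prodMk]
  refine (exists_partition_matchable_iff fun o (s : M × Fin c) => adj (.inr o) (.inl s.1)).trans ?_
  constructor
  · rintro ⟨label, s, hadj, hinj⟩
    exact ⟨fun o => (s o).1, hadj, fun o => ((s o).2, label o),
      (Equiv.prodAssoc M (Fin c) (Fin k)).injective.comp hinj⟩
  · rintro ⟨f, hadj, g, hinj⟩
    exact ⟨fun o => (g o).2, fun o => (f o, (g o).1), hadj,
      (Equiv.prodAssoc M (Fin c) (Fin k)).symm.injective.comp hinj⟩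

/-- Correctness of the max-flow test for a probing setup: `O` can be
partitioned into `k` subsets, each injectively matchable into `M × Fin c`
along adjacency (matchings into `c` copies of the metered buses), if and only
if there is an adjacency-respecting map `f : O → M` all of whose fibers have
at most `c·k` elements (the sink-side edge capacities of the flow network). -/
theorem partition_matching_iff_capacitated_assignment
    {M O : Type*} [Fintype M] [Fintype O] [DecidableEq M]
    (adj : (M ⊕ O) → (M ⊕ O) → Prop)
    (hsymm : ∀ n m, adj n m → adj m n)
    (hirr : ∀ n, ¬ adj n n)
    (c k : ℕ) (hc : 1 ≤ c) (hk : 1 ≤ k) :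
    (∃ P : Fin k → Set O,
      (∀ i j, i ≠ j → Disjoint (P i) (P j)) ∧
      (⋃ i, P i) = Set.univ ∧
      ∀ j, ∃ h : P j → M × Fin c, Function.Injective h ∧
        ∀ o : P j, adj (Sum.inr (o : O)) (Sum.inl (h o).1)) ↔
    (∃ f : O → M,
      (∀ o, adj (Sum.inr o) (Sum.inl (f o))) ∧
      ∀ m, (Finset.univ.filter fun o => f o = m).card ≤ c * k) :=
  partition_matching_iff_capacitated_assignment_general adj c k
end
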